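/- arXiv:1605.03716 — 5 statements merged into one kernel-verified Lean document; each statement's English description precedes it below -/
import Mathlib

section
/- Let Q(M) = K_μ |M|^2 + K_λ (tr M)^2 on 2×2 symmetric matrices, with K_μ > 0 and K_μ + K_λ > 0, assuming Q positive definite. Then α⁺ := sup{α > 0 : Q(M) + α det M ≥ 0 ∀M} = 2K_μ and α⁻ := sup{α > 0 : Q(M) − α det M ≥ 0 ∀M} = 2K_μ + 4K_λ. -/
open Matrix

theorem stmt_3 (Kmu Klam : ℝ) (hmu : 0 < Kmu) (hmulam : 0 < Kmu + Klam)
    (hpos : ∀ M : Matrix (Fin 2) (Fin 2) ℝ, Mᵀ = M → M ≠ 0 →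
      0 < Kmu * (∑ i, ∑ j, (M i j) ^ 2) + Klam * (Matrix.trace M) ^ 2) :
    sSup {α : ℝ | 0 < α ∧ ∀ M : Matrix (Fin 2) (Fin 2) ℝ, Mᵀ = M →
        0 ≤ Kmu * (∑ i, ∑ j, (M i j) ^ 2) + Klam * (Matrix.trace M) ^ 2 + α * M.det}
      = 2 * Kmu ∧
    sSup {α : ℝ | 0 < α ∧ ∀ M : Matrix (Fin 2) (Fin 2) ℝ, Mᵀ = M →
        0 ≤ Kmu * (∑ i, ∑ j, (M i j) ^ 2) + Klam * (Matrix.trace M) ^ 2 - α * M.det}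
      = 2 * Kmu + 4 * Klam := by
  have hI := hpos 1 (by simp) one_ne_zero
  simp only [Matrix.trace_one, Fin.sum_univ_two, Matrix.one_apply] at hI
  norm_num at hI
  -- hI : 0 < Kmu * 2 + Klam * 4 (in some form)
  constructor
  · apply IsGreatest.csSup_eq
    constructor
    · refine ⟨by linarith, ?_⟩
      intro M hM
      have h01 : M 0 1 = M 1 0 := by
        have := congrFun (congrFun hM 1) 0
        simpa [Matrix.transpose_apply] using this
      rw [Matrix.det_fin_two, Matrix.trace_fin_two]
      simp only [Fin.sum_univ_two]
      rw [h01]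
      nlinarith [mul_nonneg hmulam.le (sq_nonneg (M 0 0 + M 1 1))]
    · rintro a ⟨hapos, h⟩
      have := h (Matrix.of ![![1,0],![0,-1]])
        (by ext i j; fin_cases i <;> fin_cases j <;> rfl)
      simp [Matrix.det_fin_two, Matrix.trace_fin_two, Fin.sum_univ_two] at this
      linarith
  · apply IsGreatest.csSup_eq
    constructor
    · refine ⟨by linarith, ?_⟩
      intro M hM
      have h01 : M 0 1 = M 1 0 := by
        have := congrFun (congrFun hM 1) 0
        simpa [Matrix.transpose_apply] using this
      rw [Matrix.det_fin_two, Matrix.trace_fin_two]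
      simp only [Fin.sum_univ_two]
      rw [h01]
      nlinarith [mul_nonneg hmulam.le (sq_nonneg (M 0 0 - M 1 1)),
        mul_nonneg hmulam.le (sq_nonneg (M 1 0))]
    · rintro a ⟨hapos, h⟩
      have := h 1 (by simp)
      simp only [Matrix.trace_one, Fin.sum_univ_two, Matrix.one_apply, Matrix.det_one] at this
      norm_num at this
      linarith
end

section
/- Let ℂ be a positive definite symmetric 3×3 real matrix, 𝔻 the symmetric matrix with 𝔻₁₂ = 𝔻₂₁ = 1/2, 𝔻₃₃ = −1/4 and other entries 0, and let α⁺ = sup{α > 0 : ℂ + α𝔻 ⪰ 0} and α⁻ = sup{α > 0 : ℂ − α𝔻 ⪰ 0}. Fix z ∈ ℝ and ξ ∈ ℝ³. Then the function g_ξ(m) = ℂm·m − m·ξ + α⁺(𝔻m·m − z)⁺ + α⁻(𝔻m·m − z)⁻ attains its minimum over ℝ³, and there exists a minimizer ξ* satisfying 𝔻ξ*·ξ* = z. -/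
/-!
The energy `g` is continuous and coercive (`ℂ` is positive definite and both penalties are
nonnegative), so it has a global minimizer `m₀`. Suppose `𝔻m₀·m₀ > z`. On `{𝔻m·m ≥ z}` the energy
equals `(ℂ + α⁺𝔻)m·m − m·ξ − α⁺z`, and by maximality of `α⁺` the semidefinite form `ℂ + α⁺𝔻` has a
null vector `v`, necessarily with `𝔻v·v < 0`. Along `m₀ + t v` the form `ℂ + α⁺𝔻` is constant, while
`𝔻m·m − z` is a quadratic in `t` with roots of both signs; at the root for which `t (v·ξ) ≥ 0` the
energy has not increased and the constraint holds. The case `𝔻m₀·m₀ < z` is the same argument for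
`(−𝔻, −z, α⁻)`, which leaves the energy unchanged.
-/

open Matrix

noncomputable def Dmat : Matrix (Fin 3) (Fin 3) ℝ :=
  !![0, 1/2, 0; 1/2, 0, 0; 0, 0, -(1/4)]

open Filter

lemma exists_quadratic_root_mul_nonneg {a b c : ℝ} (hac : a * c < 0) (w : ℝ) :
    ∃ t, a * t ^ 2 + b * t + c = 0 ∧ 0 ≤ t * w := by
  have ha : a ≠ 0 := by rintro rfl; simp at hac
  have hdisc : discrim a b c = √(discrim a b c) * √(discrim a b c) :=
    (Real.mul_self_sqrt (by rw [discrim]; nlinarith [sq_nonneg b])).symm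
  set s := √(discrim a b c)
  have hroot : ∀ t, t = (-b + s) / (2 * a) ∨ t = (-b - s) / (2 * a) →
      a * t ^ 2 + b * t + c = 0 := fun t ht => by
    rw [sq]; exact (quadratic_eq_zero_iff ha hdisc t).2 ht
  set r₁ := (-b + s) / (2 * a)
  set r₂ := (-b - s) / (2 * a)
  -- the roots have product `c / a < 0`, so one of them has the sign of `w`
  have hprod : r₁ * r₂ * a ^ 2 = a * c := by
    simp only [r₁, r₂]
    field_simp
    rw [discrim] at hdisc
    linear_combination hdisc
  have hneg : r₁ * r₂ < 0 := neg_of_mul_neg_left (hprod ▸ hac) (sq_nonneg a)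
  by_cases h : 0 ≤ r₁ * w
  · exact ⟨r₁, hroot r₁ (Or.inl rfl), h⟩
  · refine ⟨r₂, hroot r₂ (Or.inr rfl), ?_⟩
    nlinarith [mul_pos_of_neg_of_neg (not_le.1 h) hneg, sq_nonneg r₁]

section QuadraticForm

variable {n : Type*} [Fintype n]

lemma add_smul_mulVec_dotProduct (C E : Matrix n n ℝ) (a : ℝ) (m : n → ℝ) :
    (C + a • E) *ᵥ m ⬝ᵥ m = C *ᵥ m ⬝ᵥ m + a * (E *ᵥ m ⬝ᵥ m) := by
  simp only [add_mulVec, smul_mulVec, add_dotProduct, smul_dotProduct, smul_eq_mul]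

lemma mulVec_smul_dotProduct_smul (M : Matrix n n ℝ) (c : ℝ) (m : n → ℝ) :
    M *ᵥ (c • m) ⬝ᵥ (c • m) = c ^ 2 * (M *ᵥ m ⬝ᵥ m) := by
  simp only [mulVec_smul, smul_dotProduct, dotProduct_smul, smul_eq_mul]
  ring

lemma mulVec_add_smul_dotProduct (M : Matrix n n ℝ) (m v : n → ℝ) (t : ℝ) :
    M *ᵥ (m + t • v) ⬝ᵥ (m + t • v)
      = M *ᵥ m ⬝ᵥ m + t * (M *ᵥ m ⬝ᵥ v + M *ᵥ v ⬝ᵥ m) + t ^ 2 * (M *ᵥ v ⬝ᵥ v) := by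
  simp only [mulVec_add, mulVec_smul, dotProduct_add, add_dotProduct, smul_dotProduct,
    dotProduct_smul, smul_eq_mul]
  ring

lemma continuous_mulVec_dotProduct (M : Matrix n n ℝ) :
    Continuous fun m : n → ℝ => M *ᵥ m ⬝ᵥ m := by
  simp only [mulVec, dotProduct]
  fun_prop

lemma mulVec_dotProduct_eq_norm_sq_mul (M : Matrix n n ℝ) (m : n → ℝ) :
    M *ᵥ m ⬝ᵥ m = ‖m‖ ^ 2 * (M *ᵥ (‖m‖⁻¹ • m) ⬝ᵥ (‖m‖⁻¹ • m)) := by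
  rcases eq_or_ne m 0 with rfl | hm
  · simp
  · rw [mulVec_smul_dotProduct_smul, ← mul_assoc, ← mul_pow,
      mul_inv_cancel₀ (norm_ne_zero_iff.2 hm), one_pow, one_mul]

lemma inv_norm_smul_mem_unitSphere {m : n → ℝ} (hm : m ≠ 0) :
    ‖m‖⁻¹ • m ∈ Metric.sphere (0 : n → ℝ) 1 := by
  simpa using norm_smul_inv_norm (𝕜 := ℝ) hm

lemma exists_abs_mulVec_dotProduct_le (M : Matrix n n ℝ) :
    ∃ K, ∀ m, |M *ᵥ m ⬝ᵥ m| ≤ K * ‖m‖ ^ 2 := by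
  obtain ⟨K, hK⟩ := (isCompact_sphere (0 : n → ℝ) 1).exists_bound_of_continuousOn
    (continuous_mulVec_dotProduct M).continuousOn
  refine ⟨K, fun m => ?_⟩
  rcases eq_or_ne m 0 with rfl | hm
  · simp
  rw [mulVec_dotProduct_eq_norm_sq_mul, abs_mul, abs_of_nonneg (by positivity), mul_comm K]
  exact mul_le_mul_of_nonneg_left (hK _ (inv_norm_smul_mem_unitSphere hm)) (by positivity)

lemma exists_pos_mul_norm_sq_le_mulVec_dotProduct {M : Matrix n n ℝ}
    (hM : ∀ m ≠ 0, 0 < M *ᵥ m ⬝ᵥ m) : ∃ δ > 0, ∀ m, δ * ‖m‖ ^ 2 ≤ M *ᵥ m ⬝ᵥ m := by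
  rcases (Metric.sphere (0 : n → ℝ) 1).eq_empty_or_nonempty with hempty | hne
  · refine ⟨1, one_pos, fun m => ?_⟩
    obtain rfl : m = 0 := by
      by_contra hm
      simpa [hempty] using inv_norm_smul_mem_unitSphere hm
    simp
  obtain ⟨u, hu, hmin⟩ := (isCompact_sphere (0 : n → ℝ) 1).exists_isMinOn hne
    (continuous_mulVec_dotProduct M).continuousOn
  refine ⟨_, hM u (Metric.ne_of_mem_sphere hu one_ne_zero), fun m => ?_⟩
  rcases eq_or_ne m 0 with rfl | hm
  · simp
  rw [mulVec_dotProduct_eq_norm_sq_mul M m, mul_comm]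
  exact mul_le_mul_of_nonneg_left (hmin (inv_norm_smul_mem_unitSphere hm)) (by positivity)

lemma exists_pos_forall_add_smul_mulVec_dotProduct_nonneg {M : Matrix n n ℝ}
    (hM : ∀ m ≠ 0, 0 < M *ᵥ m ⬝ᵥ m) (E : Matrix n n ℝ) :
    ∃ ε > 0, ∀ m, 0 ≤ M *ᵥ m ⬝ᵥ m + ε * (E *ᵥ m ⬝ᵥ m) := by
  obtain ⟨δ, hδ, hδM⟩ := exists_pos_mul_norm_sq_le_mulVec_dotProduct hM
  obtain ⟨K, hK⟩ := exists_abs_mulVec_dotProduct_le E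
  have hK1 : 0 < |K| + 1 := by positivity
  refine ⟨δ / (|K| + 1), by positivity, fun m => ?_⟩
  have hE : -((|K| + 1) * ‖m‖ ^ 2) ≤ E *ᵥ m ⬝ᵥ m := by
    have := neg_abs_le (E *ᵥ m ⬝ᵥ m)
    nlinarith [hK m, le_abs_self K, sq_nonneg ‖m‖]
  have hεE : -(δ * ‖m‖ ^ 2) ≤ δ / (|K| + 1) * (E *ᵥ m ⬝ᵥ m) := by
    calc -(δ * ‖m‖ ^ 2) = δ / (|K| + 1) * -((|K| + 1) * ‖m‖ ^ 2) := by field_simp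
      _ ≤ _ := mul_le_mul_of_nonneg_left hE (by positivity)
  linarith [hδM m]

lemma mulVec_add_smul_dotProduct_of_null {M : Matrix n n ℝ} (hM : ∀ m, 0 ≤ M *ᵥ m ⬝ᵥ m)
    {v : n → ℝ} (hv : M *ᵥ v ⬝ᵥ v = 0) (m : n → ℝ) (t : ℝ) :
    M *ᵥ (m + t • v) ⬝ᵥ (m + t • v) = M *ᵥ m ⬝ᵥ m := by
  -- along `m + s • v` the form is affine in `s`, and nonnegative, hence constant
  have hb : M *ᵥ m ⬝ᵥ v + M *ᵥ v ⬝ᵥ m = 0 := by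
    by_contra hb
    have := hM (m + ((-(M *ᵥ m ⬝ᵥ m) - 1) / (M *ᵥ m ⬝ᵥ v + M *ᵥ v ⬝ᵥ m)) • v)
    rw [mulVec_add_smul_dotProduct, hv, div_mul_cancel₀ _ hb] at this
    linarith
  rw [mulVec_add_smul_dotProduct, hb, hv]
  ring

lemma posSemidef_iff_forall_mulVec_dotProduct_nonneg {M : Matrix n n ℝ} (hM : Mᵀ = M) :
    M.PosSemidef ↔ ∀ m, 0 ≤ M *ᵥ m ⬝ᵥ m := by
  simp [posSemidef_iff_dotProduct_mulVec, IsHermitian, hM, dotProduct_comm]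

theorem sSup_posSemidef_add_smul_spec {C E : Matrix n n ℝ} (hCt : Cᵀ = C)
    (hC : ∀ m ≠ 0, 0 < C *ᵥ m ⬝ᵥ m) (hEt : Eᵀ = E) {e : n → ℝ} (he : E *ᵥ e ⬝ᵥ e < 0)
    {α : ℝ} (hα : α = sSup {α : ℝ | 0 < α ∧ (C + α • E).PosSemidef}) :
    0 < α ∧ (∀ m, 0 ≤ (C + α • E) *ᵥ m ⬝ᵥ m) ∧
      ∃ v, (C + α • E) *ᵥ v ⬝ᵥ v = 0 ∧ E *ᵥ v ⬝ᵥ v < 0 := by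
  set S := {α : ℝ | 0 < α ∧ (C + α • E).PosSemidef}
  have hS : ∀ β, β ∈ S ↔ 0 < β ∧ ∀ m, 0 ≤ C *ᵥ m ⬝ᵥ m + β * (E *ᵥ m ⬝ᵥ m) := fun β => by
    have hsymm : (C + β • E)ᵀ = C + β • E := by rw [transpose_add, transpose_smul, hCt, hEt]
    simp only [S, Set.mem_ofPred_eq, posSemidef_iff_forall_mulVec_dotProduct_nonneg hsymm,
      add_smul_mulVec_dotProduct]
  obtain ⟨ε, hε, hεS⟩ := exists_pos_forall_add_smul_mulVec_dotProduct_nonneg hC E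
  have hεmem : ε ∈ S := (hS ε).2 ⟨hε, hεS⟩
  have hbdd : BddAbove S := by
    refine ⟨C *ᵥ e ⬝ᵥ e / -(E *ᵥ e ⬝ᵥ e), fun β hβ => ?_⟩
    rw [le_div_iff₀ (neg_pos.2 he)]
    linarith [((hS β).1 hβ).2 e]
  have hpsd : ∀ m, 0 ≤ C *ᵥ m ⬝ᵥ m + α * (E *ᵥ m ⬝ᵥ m) := fun m => by
    have hclosed : IsClosed {β : ℝ | 0 ≤ C *ᵥ m ⬝ᵥ m + β * (E *ᵥ m ⬝ᵥ m)} :=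
      isClosed_le continuous_const (by fun_prop)
    exact hα ▸ closure_minimal (fun β hβ => ((hS β).1 hβ).2 m) hclosed
      (csSup_mem_closure ⟨ε, hεmem⟩ hbdd)
  have hpos : 0 < α := hα ▸ hε.trans_le (le_csSup hbdd hεmem)
  refine ⟨hpos, fun m => (add_smul_mulVec_dotProduct C E α m).symm ▸ hpsd m, ?_⟩
  -- if `C + α • E` were positive definite, `α` could be increased inside `S`
  by_contra! hnull
  have hpd : ∀ m ≠ 0, 0 < (C + α • E) *ᵥ m ⬝ᵥ m := fun m hm => by
    refine (add_smul_mulVec_dotProduct C E α m ▸ hpsd m).lt_of_ne fun h => ?_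
    have hEm := hnull m h.symm
    rw [add_smul_mulVec_dotProduct] at h
    nlinarith [hC m hm]
  obtain ⟨ε', hε', hε'S⟩ := exists_pos_forall_add_smul_mulVec_dotProduct_nonneg hpd E
  have hmem : α + ε' ∈ S := (hS _).2 ⟨by positivity, fun m => by
    have := hε'S m
    rw [add_smul_mulVec_dotProduct] at this
    linarith⟩
  linarith [le_csSup hbdd hmem]

lemma abs_dotProduct_le_norm_mul (m ξ : n → ℝ) : |m ⬝ᵥ ξ| ≤ ‖m‖ * ∑ i, |ξ i| := by
  calc |m ⬝ᵥ ξ| ≤ ∑ i, |m i| * |ξ i| := by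
        simpa only [dotProduct, abs_mul] using Finset.abs_sum_le_sum_abs (fun i => m i * ξ i) _
    _ ≤ ∑ i, ‖m‖ * |ξ i| := Finset.sum_le_sum fun i _ =>
        mul_le_mul_of_nonneg_right (norm_le_pi_norm m i) (abs_nonneg _)
    _ = ‖m‖ * ∑ i, |ξ i| := (Finset.mul_sum ..).symm

section Energy

def penalizedEnergy (C E : Matrix n n ℝ) (a b z : ℝ) (ξ m : n → ℝ) : ℝ :=
  C *ᵥ m ⬝ᵥ m - m ⬝ᵥ ξ + a * max (E *ᵥ m ⬝ᵥ m - z) 0 + b * max (-(E *ᵥ m ⬝ᵥ m - z)) 0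

variable (C E : Matrix n n ℝ) (a b z : ℝ) (ξ : n → ℝ)

lemma penalizedEnergy_neg (m : n → ℝ) :
    penalizedEnergy C (-E) b a (-z) ξ m = penalizedEnergy C E a b z ξ m := by
  have h : -(E *ᵥ m ⬝ᵥ m) - -z = -(E *ᵥ m ⬝ᵥ m - z) := by ring
  simp only [penalizedEnergy, neg_mulVec, neg_dotProduct, h, neg_neg]
  ring

lemma continuous_penalizedEnergy : Continuous (penalizedEnergy C E a b z ξ) := by
  unfold penalizedEnergy
  have := continuous_mulVec_dotProduct C
  have := continuous_mulVec_dotProduct E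
  have : Continuous fun m : n → ℝ => m ⬝ᵥ ξ := by simp only [dotProduct]; fun_prop
  fun_prop

lemma tendsto_penalizedEnergy_cocompact (hC : ∀ m ≠ 0, 0 < C *ᵥ m ⬝ᵥ m) (ha : 0 ≤ a)
    (hb : 0 ≤ b) : Tendsto (penalizedEnergy C E a b z ξ) (cocompact _) atTop := by
  obtain ⟨δ, hδ, hδC⟩ := exists_pos_mul_norm_sq_le_mulVec_dotProduct hC
  set K := ∑ i, |ξ i|
  have hlower : ∀ m, ‖m‖ * (δ * ‖m‖ - K) ≤ penalizedEnergy C E a b z ξ m := fun m => by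
    have hpen := add_nonneg (mul_nonneg ha (le_max_right (E *ᵥ m ⬝ᵥ m - z) 0))
      (mul_nonneg hb (le_max_right (-(E *ᵥ m ⬝ᵥ m - z)) 0))
    have := (abs_le.1 (abs_dotProduct_le_norm_mul m ξ)).2
    unfold penalizedEnergy
    nlinarith [hδC m]
  have hquad : Tendsto (fun t : ℝ => t * (δ * t - K)) atTop atTop :=
    tendsto_id.atTop_mul_atTop₀
      (tendsto_atTop_add_const_right _ _ (tendsto_id.const_mul_atTop hδ))
  exact tendsto_atTop_mono hlower (hquad.comp tendsto_norm_cocompact_atTop)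

lemma exists_penalizedEnergy_le_of_lt (hpsd : ∀ m, 0 ≤ (C + a • E) *ᵥ m ⬝ᵥ m)
    {v : n → ℝ} (hv : (C + a • E) *ᵥ v ⬝ᵥ v = 0) (hEv : E *ᵥ v ⬝ᵥ v < 0)
    {m₀ : n → ℝ} (hm₀ : z < E *ᵥ m₀ ⬝ᵥ m₀) :
    ∃ m₁, E *ᵥ m₁ ⬝ᵥ m₁ = z ∧
      penalizedEnergy C E a b z ξ m₁ ≤ penalizedEnergy C E a b z ξ m₀ := by
  obtain ⟨t, ht, htξ⟩ := exists_quadratic_root_mul_nonneg (b := E *ᵥ m₀ ⬝ᵥ v + E *ᵥ v ⬝ᵥ m₀)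
    (mul_neg_of_neg_of_pos hEv (sub_pos.2 hm₀)) (v ⬝ᵥ ξ)
  have hE : E *ᵥ (m₀ + t • v) ⬝ᵥ (m₀ + t • v) = z := by
    rw [mulVec_add_smul_dotProduct]
    linarith
  refine ⟨m₀ + t • v, hE, ?_⟩
  have hM := mulVec_add_smul_dotProduct_of_null hpsd hv m₀ t
  rw [add_smul_mulVec_dotProduct, add_smul_mulVec_dotProduct, hE] at hM
  have hξ : (m₀ + t • v) ⬝ᵥ ξ = m₀ ⬝ᵥ ξ + t * (v ⬝ᵥ ξ) := by
    simp only [add_dotProduct, smul_dotProduct, smul_eq_mul]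
  simp only [penalizedEnergy, hE, hξ, sub_self, neg_zero, max_self,
    max_eq_left (sub_pos.2 hm₀).le, max_eq_right (neg_nonpos.2 (sub_pos.2 hm₀).le)]
  linarith

end Energy

end QuadraticForm

lemma Dmat_transpose : Dmatᵀ = Dmat := by
  ext i j
  fin_cases i <;> fin_cases j <;> simp [Dmat]

lemma Dmat_mulVec_dotProduct (m : Fin 3 → ℝ) : Dmat *ᵥ m ⬝ᵥ m = m 0 * m 1 - m 2 ^ 2 / 4 := by
  simp [Dmat, mulVec, dotProduct, Fin.sum_univ_three]
  ring

theorem stmt_6 (C : Matrix (Fin 3) (Fin 3) ℝ) (hCs : Cᵀ = C)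
    (hC : ∀ m : Fin 3 → ℝ, m ≠ 0 → 0 < C.mulVec m ⬝ᵥ m)
    (z : ℝ) (ξ : Fin 3 → ℝ) (αp αm : ℝ)
    (hαp : αp = sSup {α : ℝ | 0 < α ∧ (C + α • Dmat).PosSemidef})
    (hαm : αm = sSup {α : ℝ | 0 < α ∧ (C - α • Dmat).PosSemidef}) :
    ∃ ξs : Fin 3 → ℝ,
      (∀ m : Fin 3 → ℝ,
        C.mulVec ξs ⬝ᵥ ξs - ξs ⬝ᵥ ξ + αp * max (Dmat.mulVec ξs ⬝ᵥ ξs - z) 0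
            + αm * max (-(Dmat.mulVec ξs ⬝ᵥ ξs - z)) 0
          ≤ C.mulVec m ⬝ᵥ m - m ⬝ᵥ ξ + αp * max (Dmat.mulVec m ⬝ᵥ m - z) 0
            + αm * max (-(Dmat.mulVec m ⬝ᵥ m - z)) 0) ∧
      Dmat.mulVec ξs ⬝ᵥ ξs = z := by
  obtain ⟨hαp_pos, hPp, vp, hvp, hDvp⟩ := sSup_posSemidef_add_smul_spec hCs hC Dmat_transpose
    (e := ![0, 0, 1]) (by rw [Dmat_mulVec_dotProduct]; simp) hαp
  obtain ⟨hαm_pos, hPm, vm, hvm, hDvm⟩ := sSup_posSemidef_add_smul_spec hCs hC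
    (by rw [transpose_neg, Dmat_transpose]) (e := ![1, 1, 0])
    (by rw [neg_mulVec, neg_dotProduct, Dmat_mulVec_dotProduct]; simp)
    (by simpa [sub_eq_add_neg] using hαm)
  obtain ⟨m₀, hm₀⟩ := (continuous_penalizedEnergy C Dmat αp αm z ξ).exists_forall_le
    (tendsto_penalizedEnergy_cocompact C Dmat αp αm z ξ hC hαp_pos.le hαm_pos.le)
  rcases lt_trichotomy (Dmat *ᵥ m₀ ⬝ᵥ m₀) z with hlt | heq | hgt
  · obtain ⟨m₁, hm₁, hle⟩ := exists_penalizedEnergy_le_of_lt C (-Dmat) αm αp (-z) ξ hPm hvm hDvm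
      (by simpa [neg_mulVec] using hlt)
    simp only [penalizedEnergy_neg] at hle
    exact ⟨m₁, fun m => hle.trans (hm₀ m), by simpa [neg_mulVec] using hm₁⟩
  · exact ⟨m₀, hm₀, heq⟩
  · obtain ⟨m₁, hm₁, hle⟩ := exists_penalizedEnergy_le_of_lt C Dmat αp αm z ξ hPp hvp hDvp hgt
    exact ⟨m₁, fun m => hle.trans (hm₀ m), hm₁⟩
end

section
/- Let ℂ, 𝔻, α⁺ be as above, m* ∈ ℝ³ with 𝔻m*·m* − z > 0, and m⁺ ∈ ker(ℂ + α⁺𝔻) \ {0}. Then there exists λ̄ > 0 such that the vector m_λ̄ = m* + λ̄m⁺ satisfies 𝔻m_λ̄·m_λ̄ = z. -/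
open Matrix

theorem stmt_9 (C : Matrix (Fin 3) (Fin 3) ℝ) (hCs : Cᵀ = C)
    (hC : ∀ m : Fin 3 → ℝ, m ≠ 0 → 0 < C.mulVec m ⬝ᵥ m)
    (αp : ℝ) (hαp : αp = sSup {α : ℝ | 0 < α ∧ (C + α • Dmat).PosSemidef})
    (z : ℝ) (ms : Fin 3 → ℝ) (hms : 0 < Dmat.mulVec ms ⬝ᵥ ms - z)
    (mp : Fin 3 → ℝ) (hmp : mp ≠ 0) (hker : (C + αp • Dmat).mulVec mp = 0) :
    ∃ lam : ℝ, 0 < lam ∧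
      Dmat.mulVec (ms + lam • mp) ⬝ᵥ (ms + lam • mp) = z := by
  set S := {α : ℝ | 0 < α ∧ (C + α • Dmat).PosSemidef} with hS
  -- key: expansion of kernel identity
  have hker' : C.mulVec mp ⬝ᵥ mp + αp * (Dmat.mulVec mp ⬝ᵥ mp) = 0 := by
    have h0 : (C + αp • Dmat).mulVec mp ⬝ᵥ mp = 0 := by rw [hker, zero_dotProduct]
    rw [Matrix.add_mulVec, Matrix.smul_mulVec, add_dotProduct,
      smul_dotProduct] at h0
    simpa using h0
  have hCmp : 0 < C.mulVec mp ⬝ᵥ mp := hC mp hmp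
  -- αp > 0
  have hαpos : 0 < αp := by
    rcases eq_or_ne αp 0 with h0 | h0
    · exfalso
      rw [h0, zero_mul, add_zero] at hker'
      linarith
    · by_cases hne : S.Nonempty
      · by_cases hbdd : BddAbove S
        · obtain ⟨x, hx⟩ := hne
          have := le_csSup hbdd hx
          rw [← hαp] at this
          exact lt_of_lt_of_le hx.1 this
        · exfalso; exact h0 (by rw [hαp, Real.sSup_of_not_bddAbove hbdd])
      · exfalso
        exact h0 (by rw [hαp, Set.not_nonempty_iff_eq_empty.mp hne, Real.sSup_empty])
  set a := Dmat.mulVec mp ⬝ᵥ mp with ha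
  set b := Dmat.mulVec ms ⬝ᵥ mp + Dmat.mulVec mp ⬝ᵥ ms with hb
  set c := Dmat.mulVec ms ⬝ᵥ ms with hc
  have haneg : a < 0 := by
    nlinarith
  have hquad : ∀ t : ℝ, Dmat.mulVec (ms + t • mp) ⬝ᵥ (ms + t • mp)
      = a * t ^ 2 + b * t + c := by
    intro t
    simp only [Matrix.mulVec_add, Matrix.mulVec_smul, add_dotProduct,
      dotProduct_add, smul_dotProduct, dotProduct_smul, smul_eq_mul, ha, hb, hc]
    ring
  -- explicit T with f T < z
  set T : ℝ := max 1 ((c - z + |b| + 1) / (-a)) with hT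
  have hT1 : 1 ≤ T := le_max_left _ _
  have hT2 : (c - z + |b| + 1) / (-a) ≤ T := le_max_right _ _
  have hTa : c - z + |b| + 1 ≤ (-a) * T := by
    rw [div_le_iff₀ (by linarith)] at hT2
    linarith [hT2]
  have habs : b ≤ |b| := le_abs_self b
  have hfT : a * T ^ 2 + b * T + c < z := by
    nlinarith [hT1, hTa, habs, abs_nonneg b]
  -- IVT
  have hcont : ContinuousOn (fun t : ℝ => a * t ^ 2 + b * t + c) (Set.Icc 0 T) := by
    fun_prop
  have hmem : z ∈ Set.Ioo (a * T ^ 2 + b * T + c) (a * 0 ^ 2 + b * 0 + c) := by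
    constructor
    · exact hfT
    · simp; linarith
  have := intermediate_value_Ioo' (by linarith : (0:ℝ) ≤ T) hcont hmem
  obtain ⟨lam, hlam, hval⟩ := this
  exact ⟨lam, hlam.1, by rw [hquad lam]; exact hval⟩
end

section
/- With Q(M)=|M|² on symmetric 2×2 matrices, A° = 0 and D the identity, the function Q̄(μ,τ) := min over γ ∈ ℝ of (|A|² + 2|det A|) where A is the symmetric matrix with entries A₁₁ = μ, A₁₂ = A₂₁ = τ, A₂₂ = γ, equals (μ² + τ²)²/μ² if μ² > τ², and equals 4τ² if μ² ≤ τ². -/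
/-!
Writing `d = μγ - τ²`, the quantity to minimise is `μ² + 2τ² + γ² + 2|d|`, which equals `(μ + γ)²`
when `d ≥ 0` and `(γ - μ)² + 4τ²` when `d ≤ 0`, and dominates both expressions for every `γ`.
Hence `4τ²` is always a lower bound, attained at `γ = μ` exactly when `μ² ≤ τ²`. If `τ² < μ²`,
on `d ≤ 0` the point `γ` is kept away from `μ` by `|μ² - μγ| ≥ μ² - τ²`, and both branches are
bounded below by their common value `(μ² + τ²)² / μ²` at the boundary point `γ = τ²/μ`.
-/

open Matrix

lemma sInf_setOf_exists_eq {α : Type*} {f : α → ℝ} {a : ℝ} (x₀ : α) (hx₀ : f x₀ = a)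
    (h : ∀ x, a ≤ f x) : sInf {q | ∃ x, q = f x} = a :=
  IsLeast.csInf_eq ⟨⟨x₀, hx₀.symm⟩, by rintro _ ⟨x, rfl⟩; exact h x⟩

lemma sum_sq_add_two_mul_abs_det_fin_two (μ τ γ : ℝ) :
    (∑ i, ∑ j, (!![μ, τ; τ, γ] : Matrix (Fin 2) (Fin 2) ℝ) i j ^ 2)
        + 2 * |(!![μ, τ; τ, γ] : Matrix (Fin 2) (Fin 2) ℝ).det|
      = μ ^ 2 + 2 * τ ^ 2 + γ ^ 2 + 2 * |μ * γ - τ ^ 2| := by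
  simp only [det_fin_two_of, Fin.sum_univ_two, of_apply, cons_val', cons_val_zero,
    cons_val_one, empty_val', cons_val_fin_one]
  ring_nf

lemma sq_add_le_frob_add_two_abs_det (μ τ γ : ℝ) :
    (μ + γ) ^ 2 ≤ μ ^ 2 + 2 * τ ^ 2 + γ ^ 2 + 2 * |μ * γ - τ ^ 2| := by
  nlinarith [le_abs_self (μ * γ - τ ^ 2)]

lemma sq_sub_add_four_mul_sq_le_frob_add_two_abs_det (μ τ γ : ℝ) :
    (γ - μ) ^ 2 + 4 * τ ^ 2 ≤ μ ^ 2 + 2 * τ ^ 2 + γ ^ 2 + 2 * |μ * γ - τ ^ 2| := by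
  nlinarith [neg_abs_le (μ * γ - τ ^ 2)]

lemma frob_add_two_abs_det_of_mul_le (μ τ γ : ℝ) (h : μ * γ ≤ τ ^ 2) :
    μ ^ 2 + 2 * τ ^ 2 + γ ^ 2 + 2 * |μ * γ - τ ^ 2| = (γ - μ) ^ 2 + 4 * τ ^ 2 := by
  rw [abs_of_nonpos (sub_nonpos.mpr h)]
  ring

lemma div_le_frob_add_two_abs_det (μ τ γ : ℝ) (h : τ ^ 2 < μ ^ 2) :
    (μ ^ 2 + τ ^ 2) ^ 2 / μ ^ 2 ≤ μ ^ 2 + 2 * τ ^ 2 + γ ^ 2 + 2 * |μ * γ - τ ^ 2| := by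
  have hμ : 0 < μ ^ 2 := (sq_nonneg τ).trans_lt h
  rw [div_le_iff₀ hμ]
  rcases le_total (μ * γ) (τ ^ 2) with hd | hd
  · rw [frob_add_two_abs_det_of_mul_le μ τ γ hd]
    have hgap : (μ ^ 2 - τ ^ 2) ^ 2 ≤ (μ ^ 2 - μ * γ) ^ 2 :=
      pow_le_pow_left₀ (by linarith) (by linarith) 2
    nlinarith
  · have hsum : (μ ^ 2 + τ ^ 2) ^ 2 ≤ (μ * (μ + γ)) ^ 2 :=
      pow_le_pow_left₀ (by positivity) (by nlinarith) 2
    nlinarith [sq_add_le_frob_add_two_abs_det μ τ γ]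

theorem stmt_11 (μ τ : ℝ) :
    (μ ^ 2 > τ ^ 2 →
      sInf {q : ℝ | ∃ γ : ℝ,
          q = (∑ i, ∑ j, ((!![μ, τ; τ, γ] : Matrix (Fin 2) (Fin 2) ℝ) i j) ^ 2)
              + 2 * |(!![μ, τ; τ, γ] : Matrix (Fin 2) (Fin 2) ℝ).det|}
        = (μ ^ 2 + τ ^ 2) ^ 2 / μ ^ 2) ∧
    (μ ^ 2 ≤ τ ^ 2 →
      sInf {q : ℝ | ∃ γ : ℝ,
          q = (∑ i, ∑ j, ((!![μ, τ; τ, γ] : Matrix (Fin 2) (Fin 2) ℝ) i j) ^ 2)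
              + 2 * |(!![μ, τ; τ, γ] : Matrix (Fin 2) (Fin 2) ℝ).det|}
        = 4 * τ ^ 2) := by
  simp only [sum_sq_add_two_mul_abs_det_fin_two]
  refine ⟨fun h => ?_, fun h => ?_⟩
  · have hμ : μ ≠ 0 := by rintro rfl; nlinarith [sq_nonneg τ]
    refine sInf_setOf_exists_eq (τ ^ 2 / μ) ?_ fun γ => div_le_frob_add_two_abs_det μ τ γ h
    rw [frob_add_two_abs_det_of_mul_le μ τ _ (by field_simp; rfl)]
    field_simp
    ring
  · refine sInf_setOf_exists_eq μ ?_ fun γ => ?_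
    · rw [frob_add_two_abs_det_of_mul_le μ τ μ (by nlinarith)]
      ring
    · nlinarith [sq_sub_add_four_mul_sq_le_frob_add_two_abs_det μ τ γ, sq_nonneg (γ - μ)]
end

section
/- Let K₁₁, K₂₂, K₃₃ > 0 and K₁₂ ∈ ℝ with K₁₁K₂₂ > K₁₂², and define the block matrix ℂ = diag((K₁₁ K₁₂; K₁₂ K₂₂), K₃₃) in ℝ^{3×3} and 𝔻 as before. Then the eigenvalues of ℂ ± α𝔻 are K₃₃ ∓ α/4 and (K₁₁+K₂₂)/2 ± √(((K₁₁−K₂₂)/2)² + (K₁₂ ± α/2)²), and consequently α⁺ = min{4K₃₃, 2(√(K₁₁K₂₂) − K₁₂)} and α⁻ = 2(√(K₁₁K₂₂) + K₁₂). -/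
/-!
Adding a multiple of `Dmat` keeps the block shape `!![a, b, 0; b, c, 0; 0, 0, d]`, only moving
`b` by `± α/2` and `d` by `∓ α/4`. For such a matrix `det (M - t • 1)` factors as
`(d - t) * ((t - (a + c)/2)² - ((a - c)/2)² - b²)`, which gives the eigenvalues, and (for `a > 0`)
it is positive semidefinite iff `b² ≤ a c` and `0 ≤ d`. With `r = √(K11 K22) > |K12|` these become,
for `α > 0`, the linear constraints `α ≤ 4 K33`, `α ≤ 2 (r - K12)` resp. `α ≤ 2 (r + K12)`,
so each set of admissible `α` is an interval `(0, α±]`.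
-/

open Matrix

theorem Matrix.exists_mulVec_eq_smul_iff_det_sub_eq_zero {n K : Type*} [Fintype n]
    [DecidableEq n] [Field K] (M : Matrix n n K) (t : K) :
    (∃ v : n → K, v ≠ 0 ∧ M *ᵥ v = t • v) ↔ (M - t • 1).det = 0 := by
  simp only [← exists_mulVec_eq_zero_iff, sub_mulVec, smul_mulVec, one_mulVec, sub_eq_zero]

theorem det_blockMat_sub_smul_one (a b c d t : ℝ) :
    (!![a, b, 0; b, c, 0; 0, 0, d] - t • 1 : Matrix (Fin 3) (Fin 3) ℝ).det =
      (d - t) * ((t - (a + c) / 2) ^ 2 - (((a - c) / 2) ^ 2 + b ^ 2)) := by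
  rw [det_fin_three]
  simp [one_apply]
  ring

theorem Real.sq_eq_iff_eq_sqrt_or_eq_neg_sqrt {x q : ℝ} (hq : 0 ≤ q) :
    x ^ 2 = q ↔ x = √q ∨ x = -√q := by
  rw [← sq_eq_sq_iff_eq_or_eq_neg, Real.sq_sqrt hq]

theorem exists_eigenvector_blockMat_iff (a b c d t : ℝ) :
    (∃ v : Fin 3 → ℝ, v ≠ 0 ∧
        (!![a, b, 0; b, c, 0; 0, 0, d] : Matrix (Fin 3) (Fin 3) ℝ) *ᵥ v = t • v) ↔
      t = d ∨ t = (a + c) / 2 + √(((a - c) / 2) ^ 2 + b ^ 2) ∨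
        t = (a + c) / 2 - √(((a - c) / 2) ^ 2 + b ^ 2) := by
  rw [exists_mulVec_eq_smul_iff_det_sub_eq_zero, det_blockMat_sub_smul_one, mul_eq_zero,
    sub_eq_zero, sub_eq_zero, Real.sq_eq_iff_eq_sqrt_or_eq_neg_sqrt (by positivity),
    sub_eq_iff_eq_add', sub_eq_iff_eq_add', ← sub_eq_add_neg, eq_comm (a := d)]

theorem posSemidef_blockMat_iff (a b c d : ℝ) (ha : 0 < a) :
    (!![a, b, 0; b, c, 0; 0, 0, d] : Matrix (Fin 3) (Fin 3) ℝ).PosSemidef ↔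
      b ^ 2 ≤ a * c ∧ 0 ≤ d := by
  rw [posSemidef_iff_dotProduct_mulVec]
  constructor
  · rintro ⟨-, hq⟩
    constructor
    · have h := hq ![b, -a, 0]
      simp [mulVec, dotProduct, Fin.sum_univ_three] at h
      nlinarith
    · simpa [mulVec, dotProduct, Fin.sum_univ_three] using hq ![0, 0, 1]
  · rintro ⟨hb, hd⟩
    refine ⟨?_, fun x => ?_⟩
    · ext i j
      fin_cases i <;> fin_cases j <;> rfl
    · simp [mulVec, dotProduct, Fin.sum_univ_three]
      -- `a • (quadratic form) = (a x₀ + b x₁)² + (a c - b²) x₁² + a d x₂²`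
      nlinarith [sq_nonneg (a * x 0 + b * x 1), mul_nonneg hd (sq_nonneg (x 2)),
        mul_nonneg (sub_nonneg.2 hb) (sq_nonneg (x 1))]

theorem blockMat_add_smul_Dmat (a b c d α : ℝ) :
    !![a, b, 0; b, c, 0; 0, 0, d] + α • Dmat =
      !![a, b + α / 2, 0; b + α / 2, c, 0; 0, 0, d - α / 4] := by
  ext i j
  fin_cases i <;> fin_cases j <;> simp [Dmat] <;> ring

theorem blockMat_sub_smul_Dmat (a b c d α : ℝ) :
    !![a, b, 0; b, c, 0; 0, 0, d] - α • Dmat =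
      !![a, b - α / 2, 0; b - α / 2, c, 0; 0, 0, d + α / 4] := by
  ext i j
  fin_cases i <;> fin_cases j <;> simp [Dmat] <;> ring

theorem sSup_setOf_pos_and_eq {P : ℝ → Prop} {m : ℝ} (hm : 0 < m)
    (hP : ∀ α, 0 < α → (P α ↔ α ≤ m)) : sSup {α | 0 < α ∧ P α} = m := by
  have : {α | 0 < α ∧ P α} = Set.Ioc 0 m := by
    ext α
    exact ⟨fun ⟨hα, h⟩ => ⟨hα, (hP α hα).1 h⟩, fun ⟨hα, h⟩ => ⟨hα, (hP α hα).2 h⟩⟩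
  rw [this, csSup_Ioc hm]

theorem stmt_12_general (K11 K22 K33 K12 : ℝ) (h11 : 0 < K11)
    (h33 : 0 < K33) (hdet : K12 ^ 2 < K11 * K22)
    (C : Matrix (Fin 3) (Fin 3) ℝ)
    (hC : C = !![K11, K12, 0; K12, K22, 0; 0, 0, K33]) :
    (∀ α t : ℝ,
      ((∃ v : Fin 3 → ℝ, v ≠ 0 ∧ (C + α • Dmat).mulVec v = t • v) ↔
        t = K33 - α / 4 ∨
        t = (K11 + K22) / 2 + Real.sqrt (((K11 - K22) / 2) ^ 2 + (K12 + α / 2) ^ 2) ∨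
        t = (K11 + K22) / 2 - Real.sqrt (((K11 - K22) / 2) ^ 2 + (K12 + α / 2) ^ 2))) ∧
    (∀ α t : ℝ,
      ((∃ v : Fin 3 → ℝ, v ≠ 0 ∧ (C - α • Dmat).mulVec v = t • v) ↔
        t = K33 + α / 4 ∨
        t = (K11 + K22) / 2 + Real.sqrt (((K11 - K22) / 2) ^ 2 + (K12 - α / 2) ^ 2) ∨
        t = (K11 + K22) / 2 - Real.sqrt (((K11 - K22) / 2) ^ 2 + (K12 - α / 2) ^ 2))) ∧
    sSup {α : ℝ | 0 < α ∧ (C + α • Dmat).PosSemidef}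
      = min (4 * K33) (2 * (Real.sqrt (K11 * K22) - K12)) ∧
    sSup {α : ℝ | 0 < α ∧ (C - α • Dmat).PosSemidef}
      = 2 * (Real.sqrt (K11 * K22) + K12) := by
  subst hC
  set r := √(K11 * K22)
  have hr : r ^ 2 = K11 * K22 := Real.sq_sqrt (by nlinarith)
  have hr0 : 0 ≤ r := Real.sqrt_nonneg _
  obtain ⟨hK12_gt, hK12_lt⟩ := abs_lt.1 (abs_lt_of_sq_lt_sq (hr ▸ hdet) hr0)
  refine ⟨fun α t => ?_, fun α t => ?_, ?_, ?_⟩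
  · rw [blockMat_add_smul_Dmat, exists_eigenvector_blockMat_iff]
  · rw [blockMat_sub_smul_Dmat, exists_eigenvector_blockMat_iff]
  · refine sSup_setOf_pos_and_eq (lt_min (by linarith) (by linarith)) fun α hα => ?_
    rw [blockMat_add_smul_Dmat, posSemidef_blockMat_iff _ _ _ _ h11, ← hr, sq_le_sq,
      abs_of_nonneg hr0, abs_le, le_min_iff]
    constructor
    · rintro ⟨⟨-, h⟩, h'⟩
      constructor <;> linarith
    · rintro ⟨h, h'⟩
      refine ⟨⟨?_, ?_⟩, ?_⟩ <;> linarith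
  · refine sSup_setOf_pos_and_eq (by linarith) fun α hα => ?_
    rw [blockMat_sub_smul_Dmat, posSemidef_blockMat_iff _ _ _ _ h11, ← hr, sq_le_sq,
      abs_of_nonneg hr0, abs_le]
    constructor
    · rintro ⟨⟨h, -⟩, -⟩
      linarith
    · intro h
      refine ⟨⟨?_, ?_⟩, ?_⟩ <;> linarith

theorem stmt_12 (K11 K22 K33 K12 : ℝ) (h11 : 0 < K11) (h22 : 0 < K22)
    (h33 : 0 < K33) (hdet : K12 ^ 2 < K11 * K22)
    (C : Matrix (Fin 3) (Fin 3) ℝ)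
    (hC : C = !![K11, K12, 0; K12, K22, 0; 0, 0, K33]) :
    (∀ α t : ℝ,
      ((∃ v : Fin 3 → ℝ, v ≠ 0 ∧ (C + α • Dmat).mulVec v = t • v) ↔
        t = K33 - α / 4 ∨
        t = (K11 + K22) / 2 + Real.sqrt (((K11 - K22) / 2) ^ 2 + (K12 + α / 2) ^ 2) ∨
        t = (K11 + K22) / 2 - Real.sqrt (((K11 - K22) / 2) ^ 2 + (K12 + α / 2) ^ 2))) ∧
    (∀ α t : ℝ,
      ((∃ v : Fin 3 → ℝ, v ≠ 0 ∧ (C - α • Dmat).mulVec v = t • v) ↔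
        t = K33 + α / 4 ∨
        t = (K11 + K22) / 2 + Real.sqrt (((K11 - K22) / 2) ^ 2 + (K12 - α / 2) ^ 2) ∨
        t = (K11 + K22) / 2 - Real.sqrt (((K11 - K22) / 2) ^ 2 + (K12 - α / 2) ^ 2))) ∧
    sSup {α : ℝ | 0 < α ∧ (C + α • Dmat).PosSemidef}
      = min (4 * K33) (2 * (Real.sqrt (K11 * K22) - K12)) ∧
    sSup {α : ℝ | 0 < α ∧ (C - α • Dmat).PosSemidef}
      = 2 * (Real.sqrt (K11 * K22) + K12) :=
  stmt_12_general K11 K22 K33 K12 h11 h33 hdet C hC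
end
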